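/- With g_k = R_{kπ/4} T_{τ₁} R_{-kπ/4} (k = 0,1,2,3) and tanh(τ₁/2) = √(√2-1), the generators satisfy the relation (g₀ g₁⁻¹ g₂ g₃⁻¹)(g₀⁻¹ g₁ g₂⁻¹ g₃) = Id, where the products are taken as Möbius transformations of the Poincaré disc (equivalently, the corresponding matrix product is a scalar multiple of the identity). -/
import Mathlib


open Real

/-- The matrix of the generator `g_k` of the Fuchsian group of the hyperbolic
double doughnut: `((1+√2, √(2+2√2) e^{ikπ/4}), (√(2+2√2) e^{-ikπ/4}, 1+√2))`. -/
noncomputable def gMat (k : ℕ) : Matrix (Fin 2) (Fin 2) ℂ :=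
  !![((1 + Real.sqrt 2 : ℝ) : ℂ),
     (Real.sqrt (2 + 2 * Real.sqrt 2) : ℝ) * Complex.exp (Complex.I * (k * π / 4));
     (Real.sqrt (2 + 2 * Real.sqrt 2) : ℝ) * Complex.exp (-(Complex.I * (k * π / 4))),
     ((1 + Real.sqrt 2 : ℝ) : ℂ)]

noncomputable def sC : ℂ := ((Real.sqrt 2 : ℝ) : ℂ)
noncomputable def bC : ℂ := ((Real.sqrt (2 + 2 * Real.sqrt 2) : ℝ) : ℂ)

lemma hsC : sC ^ 2 = 2 := by
  have : Real.sqrt 2 ^ 2 = 2 := Real.sq_sqrt (by norm_num)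
  rw [sC]; norm_cast

lemma hbC : bC ^ 2 = 2 + 2 * sC := by
  have h2 : (0:ℝ) ≤ Real.sqrt 2 := Real.sqrt_nonneg 2
  have : Real.sqrt (2 + 2 * Real.sqrt 2) ^ 2 = 2 + 2 * Real.sqrt 2 :=
    Real.sq_sqrt (by positivity)
  rw [bC, sC]; exact_mod_cast this

lemma hI : Complex.I ^ 2 = -1 := Complex.I_sq

lemma expv (x : ℝ) : Complex.exp (Complex.I * (x:ℂ)) =
    ((Real.cos x : ℝ) : ℂ) + ((Real.sin x : ℝ) : ℂ) * Complex.I := by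
  rw [mul_comm, Complex.exp_mul_I, ← Complex.ofReal_cos, ← Complex.ofReal_sin]

lemma hcos0' : Real.cos (0*Real.pi/4) = 1 := by norm_num
lemma hsin0' : Real.sin (0*Real.pi/4) = 0 := by norm_num
lemma hcos1' : Real.cos (1*Real.pi/4) = Real.sqrt 2/2 := by
  rw [show (1*Real.pi/4 : ℝ) = Real.pi/4 by ring, Real.cos_pi_div_four]
lemma hsin1' : Real.sin (1*Real.pi/4) = Real.sqrt 2/2 := by
  rw [show (1*Real.pi/4 : ℝ) = Real.pi/4 by ring, Real.sin_pi_div_four]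
lemma hcos2' : Real.cos (2*Real.pi/4) = 0 := by
  rw [show (2*Real.pi/4 : ℝ) = Real.pi/2 by ring, Real.cos_pi_div_two]
lemma hsin2' : Real.sin (2*Real.pi/4) = 1 := by
  rw [show (2*Real.pi/4 : ℝ) = Real.pi/2 by ring, Real.sin_pi_div_two]
lemma hcos3' : Real.cos (3*Real.pi/4) = -(Real.sqrt 2/2) := by
  rw [show (3*Real.pi/4 : ℝ) = Real.pi - Real.pi/4 by ring, Real.cos_pi_sub, Real.cos_pi_div_four]
lemma hsin3' : Real.sin (3*Real.pi/4) = Real.sqrt 2/2 := by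
  rw [show (3*Real.pi/4 : ℝ) = Real.pi - Real.pi/4 by ring, Real.sin_pi_sub, Real.sin_pi_div_four]

lemma gMat0_eq : gMat 0 = !![1+sC, bC*1; bC*1, 1+sC] := by
  have harg : Complex.I * ((0:ℕ) * (Real.pi:ℂ) / 4) = Complex.I * ((0*Real.pi/4 : ℝ):ℂ) := by
    push_cast; ring
  have harg2 : -(Complex.I * ((0:ℕ) * (Real.pi:ℂ) / 4)) = Complex.I * ((-(0*Real.pi/4) : ℝ):ℂ) := by
    push_cast; ring
  have hc : Real.cos (0*Real.pi/4) = 1 := by rw [hcos0']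
  have hs : Real.sin (0*Real.pi/4) = 0 := by rw [hsin0']
  simp only [gMat]
  rw [harg2, harg, expv, expv, Real.cos_neg, Real.sin_neg, hc, hs, sC, bC]
  push_cast
  ext i j
  fin_cases i <;> fin_cases j <;>
    simp only [Matrix.cons_val', Matrix.cons_val_zero, Matrix.cons_val_one, Matrix.head_cons,
      Matrix.head_fin_const, Matrix.empty_val', Matrix.cons_val_fin_one, Matrix.of_apply] <;>
    ring

lemma gMat1_eq : gMat 1 = !![1+sC, bC*(sC/2 + sC/2*Complex.I); bC*(sC/2 - sC/2*Complex.I), 1+sC] := by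
  have harg : Complex.I * ((1:ℕ) * (Real.pi:ℂ) / 4) = Complex.I * ((1*Real.pi/4 : ℝ):ℂ) := by
    push_cast; ring
  have harg2 : -(Complex.I * ((1:ℕ) * (Real.pi:ℂ) / 4)) = Complex.I * ((-(1*Real.pi/4) : ℝ):ℂ) := by
    push_cast; ring
  have hc : Real.cos (1*Real.pi/4) = (Real.sqrt 2/2) := by rw [hcos1']
  have hs : Real.sin (1*Real.pi/4) = (Real.sqrt 2/2) := by rw [hsin1']
  simp only [gMat]
  rw [harg2, harg, expv, expv, Real.cos_neg, Real.sin_neg, hc, hs, sC, bC]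
  push_cast
  ext i j
  fin_cases i <;> fin_cases j <;>
    simp only [Matrix.cons_val', Matrix.cons_val_zero, Matrix.cons_val_one, Matrix.head_cons,
      Matrix.head_fin_const, Matrix.empty_val', Matrix.cons_val_fin_one, Matrix.of_apply] <;>
    ring

lemma gMat2_eq : gMat 2 = !![1+sC, bC*Complex.I; bC*-Complex.I, 1+sC] := by
  have harg : Complex.I * ((2:ℕ) * (Real.pi:ℂ) / 4) = Complex.I * ((2*Real.pi/4 : ℝ):ℂ) := by
    push_cast; ring
  have harg2 : -(Complex.I * ((2:ℕ) * (Real.pi:ℂ) / 4)) = Complex.I * ((-(2*Real.pi/4) : ℝ):ℂ) := by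
    push_cast; ring
  have hc : Real.cos (2*Real.pi/4) = 0 := by rw [hcos2']
  have hs : Real.sin (2*Real.pi/4) = 1 := by rw [hsin2']
  simp only [gMat]
  rw [harg2, harg, expv, expv, Real.cos_neg, Real.sin_neg, hc, hs, sC, bC]
  push_cast
  ext i j
  fin_cases i <;> fin_cases j <;>
    simp only [Matrix.cons_val', Matrix.cons_val_zero, Matrix.cons_val_one, Matrix.head_cons,
      Matrix.head_fin_const, Matrix.empty_val', Matrix.cons_val_fin_one, Matrix.of_apply] <;>
    ring

lemma gMat3_eq : gMat 3 = !![1+sC, bC*(-sC/2 + sC/2*Complex.I); bC*(-sC/2 - sC/2*Complex.I), 1+sC] := by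
  have harg : Complex.I * ((3:ℕ) * (Real.pi:ℂ) / 4) = Complex.I * ((3*Real.pi/4 : ℝ):ℂ) := by
    push_cast; ring
  have harg2 : -(Complex.I * ((3:ℕ) * (Real.pi:ℂ) / 4)) = Complex.I * ((-(3*Real.pi/4) : ℝ):ℂ) := by
    push_cast; ring
  have hc : Real.cos (3*Real.pi/4) = (-(Real.sqrt 2/2)) := by rw [hcos3']
  have hs : Real.sin (3*Real.pi/4) = (Real.sqrt 2/2) := by rw [hsin3']
  simp only [gMat]
  rw [harg2, harg, expv, expv, Real.cos_neg, Real.sin_neg, hc, hs, sC, bC]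
  push_cast
  ext i j
  fin_cases i <;> fin_cases j <;>
    simp only [Matrix.cons_val', Matrix.cons_val_zero, Matrix.cons_val_one, Matrix.head_cons,
      Matrix.head_fin_const, Matrix.empty_val', Matrix.cons_val_fin_one, Matrix.of_apply] <;>
    ring

lemma gInv0_eq : (gMat 0)⁻¹ = !![1+sC, -(bC*1); -(bC*1), 1+sC] := by
  apply Matrix.inv_eq_right_inv
  rw [gMat0_eq]
  ext i j
  fin_cases i <;> fin_cases j <;>
    simp [Matrix.mul_apply, Fin.sum_univ_two, Matrix.one_apply]
  · linear_combination ((1:ℂ)) * hsC + ((-1:ℂ)) * hbC + (0) * hI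
  · linear_combination (0) * hsC + (0) * hbC + (0) * hI
  · linear_combination (0) * hsC + (0) * hbC + (0) * hI
  · linear_combination ((1:ℂ)) * hsC + ((-1:ℂ)) * hbC + (0) * hI

lemma gInv1_eq : (gMat 1)⁻¹ = !![1+sC, -(bC*(sC/2 + sC/2*Complex.I)); -(bC*(sC/2 - sC/2*Complex.I)), 1+sC] := by
  apply Matrix.inv_eq_right_inv
  rw [gMat1_eq]
  ext i j
  fin_cases i <;> fin_cases j <;>
    simp [Matrix.mul_apply, Fin.sum_univ_two, Matrix.one_apply]
  · linear_combination ((-1:ℂ)*sC) * hsC + ((-1/2:ℂ)*sC^2) * hbC + ((1/4:ℂ)*sC^2*bC^2) * hI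
  · linear_combination (0) * hsC + (0) * hbC + (0) * hI
  · linear_combination (0) * hsC + (0) * hbC + (0) * hI
  · linear_combination ((-1:ℂ)*sC) * hsC + ((-1/2:ℂ)*sC^2) * hbC + ((1/4:ℂ)*sC^2*bC^2) * hI

lemma gInv2_eq : (gMat 2)⁻¹ = !![1+sC, -(bC*Complex.I); -(bC*-Complex.I), 1+sC] := by
  apply Matrix.inv_eq_right_inv
  rw [gMat2_eq]
  ext i j
  fin_cases i <;> fin_cases j <;>
    simp [Matrix.mul_apply, Fin.sum_univ_two, Matrix.one_apply]
  · linear_combination ((1:ℂ)) * hsC + ((-1:ℂ)) * hbC + (bC^2) * hI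
  · linear_combination (0) * hsC + (0) * hbC + (0) * hI
  · linear_combination (0) * hsC + (0) * hbC + (0) * hI
  · linear_combination ((1:ℂ)) * hsC + ((-1:ℂ)) * hbC + (bC^2) * hI

lemma gInv3_eq : (gMat 3)⁻¹ = !![1+sC, -(bC*(-sC/2 + sC/2*Complex.I)); -(bC*(-sC/2 - sC/2*Complex.I)), 1+sC] := by
  apply Matrix.inv_eq_right_inv
  rw [gMat3_eq]
  ext i j
  fin_cases i <;> fin_cases j <;>
    simp [Matrix.mul_apply, Fin.sum_univ_two, Matrix.one_apply]
  · linear_combination ((-1:ℂ)*sC) * hsC + ((-1/2:ℂ)*sC^2) * hbC + ((1/4:ℂ)*sC^2*bC^2) * hI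
  · linear_combination (0) * hsC + (0) * hbC + (0) * hI
  · linear_combination (0) * hsC + (0) * hbC + (0) * hI
  · linear_combination ((-1:ℂ)*sC) * hsC + ((-1/2:ℂ)*sC^2) * hbC + ((1/4:ℂ)*sC^2*bC^2) * hI

set_option maxHeartbeats 4000000 in
/-- The generators of the Fuchsian group satisfy the relation
`(g₀ g₁⁻¹ g₂ g₃⁻¹)(g₀⁻¹ g₁ g₂⁻¹ g₃) = Id`, where the products are taken as
Möbius transformations of the Poincaré disc; equivalently the corresponding
matrix product is a nonzero scalar multiple of the identity. -/
theorem fuchsian_relation :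
    ∃ c : ℂ, c ≠ 0 ∧
      (gMat 0 * (gMat 1)⁻¹ * gMat 2 * (gMat 3)⁻¹) *
        ((gMat 0)⁻¹ * gMat 1 * (gMat 2)⁻¹ * gMat 3) = c • (1 : Matrix (Fin 2) (Fin 2) ℂ) := by
  refine ⟨1, one_ne_zero, ?_⟩
  rw [gInv0_eq, gInv1_eq, gInv2_eq, gInv3_eq, gMat0_eq, gMat1_eq, gMat2_eq, gMat3_eq, one_smul]
  ext i j
  fin_cases i <;> fin_cases j <;>
    simp [Matrix.mul_apply, Fin.sum_univ_two, Matrix.one_apply]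
  · linear_combination ((4:ℂ) + (2:ℂ)*Complex.I + (6:ℂ)*sC + (6:ℂ)*sC*Complex.I + (-7:ℂ)*sC^2 + (2:ℂ)*sC^2*Complex.I + (-16:ℂ)*sC^3 + (-10:ℂ)*sC^3*Complex.I + (3:ℂ)*sC^4 + (-10:ℂ)*sC^4*Complex.I + (14:ℂ)*sC^5 + (2:ℂ)*sC^5*Complex.I + (2:ℂ)*sC^6 + (6:ℂ)*sC^6*Complex.I + (-4:ℂ)*sC^7 + (2:ℂ)*sC^7*Complex.I + (-1:ℂ)*sC^8) * hsC + ((-4:ℂ) + (-2:ℂ)*Complex.I + (-1:ℂ)*bC^2 + (-6:ℂ)*sC + (-4:ℂ)*sC*Complex.I + (4:ℂ)*sC*bC^2 + (2:ℂ)*sC*bC^2*Complex.I + sC^2 + (3:ℂ)*sC^2*Complex.I + (12:ℂ)*sC^2*bC^2 + (3:ℂ)*sC^2*bC^2*Complex.I + (-3:ℂ)*sC^2*bC^4 + (-10:ℂ)*sC^3 + (10:ℂ)*sC^3*Complex.I + (6:ℂ)*sC^3*bC^2 + (-5:ℂ)*sC^3*bC^2*Complex.I + (-2:ℂ)*sC^3*bC^4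 + sC^3*bC^4*Complex.I + (-63/2:ℂ)*sC^4 + sC^4*Complex.I + (3/4:ℂ)*sC^4*bC^2 + (-12:ℂ)*sC^4*bC^2*Complex.I + (3:ℂ)*sC^4*bC^4 + (2:ℂ)*sC^4*bC^4*Complex.I + (-1/4:ℂ)*sC^4*bC^6 + (-37/2:ℂ)*sC^5 + (-8:ℂ)*sC^5*Complex.I + (6:ℂ)*sC^5*bC^2 + (-6:ℂ)*sC^5*bC^2*Complex.I + (1/2:ℂ)*sC^5*bC^4 + sC^5*bC^4*Complex.I + (4:ℂ)*sC^6 + (-3:ℂ)*sC^6*Complex.I + (9/2:ℂ)*sC^6*bC^2 + sC^6*bC^2*Complex.I + (-3/2:ℂ)*sC^6*bC^4 + (3:ℂ)*sC^7 + (2:ℂ)*sC^7*Complex.I + sC^7*bC^2*Complex.I + (-3/2:ℂ)*sC^8 + sC^8*Complex.I + (-1/4:ℂ)*sC^8*bC^2 + (-1/2:ℂ)*sC^9) * hbC + (bC^2 + bC^4 + (6:ℂ)*sC*bC^2 + (-4:ℂ)*sC*bC^4 + (-2:ℂ)*sC*bC^4*Complex.I + (31/2:ℂ)*sC^2*bC^2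 + (-35/2:ℂ)*sC^2*bC^4 + (-3:ℂ)*sC^2*bC^4*Complex.I + (1/2:ℂ)*sC^2*bC^4*Complex.I^2 + (3:ℂ)*sC^2*bC^6 + (-3/2:ℂ)*sC^2*bC^6*Complex.I^2 + (23:ℂ)*sC^3*bC^2 + (-14:ℂ)*sC^3*bC^4 + (6:ℂ)*sC^3*bC^4*Complex.I + (2:ℂ)*sC^3*bC^4*Complex.I^2 + (2:ℂ)*sC^3*bC^6 + (-1:ℂ)*sC^3*bC^6*Complex.I + (-1:ℂ)*sC^3*bC^6*Complex.I^2 + (1/2:ℂ)*sC^3*bC^6*Complex.I^3 + (45/2:ℂ)*sC^4*bC^2 + (69/16:ℂ)*sC^4*bC^4 + (57/4:ℂ)*sC^4*bC^4*Complex.I + (49/16:ℂ)*sC^4*bC^4*Complex.I^2 + (-57/16:ℂ)*sC^4*bC^6 + (-15/8:ℂ)*sC^4*bC^6*Complex.I + (7/4:ℂ)*sC^4*bC^6*Complex.I^2 + (7/8:ℂ)*sC^4*bC^6*Complex.I^3 + (1/16:ℂ)*sC^4*bC^6*Complex.I^4 + (1/4:ℂ)*sC^4*bC^8 + (-3/16:ℂ)*sC^4*bC^8*Complex.I^2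 + (1/16:ℂ)*sC^4*bC^8*Complex.I^4 + (16:ℂ)*sC^5*bC^2 + (13/4:ℂ)*sC^5*bC^4 + (7:ℂ)*sC^5*bC^4*Complex.I + (9/4:ℂ)*sC^5*bC^4*Complex.I^2 + (-9/8:ℂ)*sC^5*bC^6 + (-3/4:ℂ)*sC^5*bC^6*Complex.I + (1/2:ℂ)*sC^5*bC^6*Complex.I^2 + (1/4:ℂ)*sC^5*bC^6*Complex.I^3 + (1/8:ℂ)*sC^5*bC^6*Complex.I^4 + (17/2:ℂ)*sC^6*bC^2 + (-45/8:ℂ)*sC^6*bC^4 + (-3/2:ℂ)*sC^6*bC^4*Complex.I + (7/8:ℂ)*sC^6*bC^4*Complex.I^2 + (23/16:ℂ)*sC^6*bC^6 + (1/8:ℂ)*sC^6*bC^6*Complex.I + (-3/4:ℂ)*sC^6*bC^6*Complex.I^2 + (-1/8:ℂ)*sC^6*bC^6*Complex.I^3 + (1/16:ℂ)*sC^6*bC^6*Complex.I^4 + (3:ℂ)*sC^7*bC^2 + (-11/4:ℂ)*sC^7*bC^4 + (-1:ℂ)*sC^7*bC^4*Complex.I + (1/4:ℂ)*sC^7*bC^4*Complex.I^2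 + (1/2:ℂ)*sC^8*bC^2 + (5/16:ℂ)*sC^8*bC^4 + (1/4:ℂ)*sC^8*bC^4*Complex.I + (1/16:ℂ)*sC^8*bC^4*Complex.I^2) * hI
  · linear_combination ((2:ℂ)*bC + (-2:ℂ)*bC*Complex.I + (2:ℂ)*sC*bC + (-4:ℂ)*sC*bC*Complex.I + (-6:ℂ)*sC^2*bC + (2:ℂ)*sC^2*bC*Complex.I + (-6:ℂ)*sC^3*bC + (8:ℂ)*sC^3*bC*Complex.I + (6:ℂ)*sC^4*bC + (2:ℂ)*sC^4*bC*Complex.I + (6:ℂ)*sC^5*bC + (-4:ℂ)*sC^5*bC*Complex.I + (-2:ℂ)*sC^6*bC + (-2:ℂ)*sC^6*bC*Complex.I + (-2:ℂ)*sC^7*bC) * hsC + ((-2:ℂ)*bC + (2:ℂ)*bC*Complex.I + (2:ℂ)*sC*bC*Complex.I + (2:ℂ)*sC*bC^3 + (-2:ℂ)*sC*bC^3*Complex.I + (7:ℂ)*sC^2*bC + (-5:ℂ)*sC^2*bC*Complex.I + (-1:ℂ)*sC^2*bC^3 + (-1:ℂ)*sC^2*bC^3*Complex.I + (-5:ℂ)*sC^3*bC*Complex.I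 + (-7:ℂ)*sC^3*bC^3 + (6:ℂ)*sC^3*bC^3*Complex.I + sC^3*bC^5 + (-1:ℂ)*sC^3*bC^5*Complex.I + (-9:ℂ)*sC^4*bC + (4:ℂ)*sC^4*bC*Complex.I + (6:ℂ)*sC^4*bC^3*Complex.I + (-1:ℂ)*sC^4*bC^5*Complex.I + (4:ℂ)*sC^5*bC*Complex.I + (6:ℂ)*sC^5*bC^3 + (-1:ℂ)*sC^5*bC^5 + (5:ℂ)*sC^6*bC + (-1:ℂ)*sC^6*bC*Complex.I + sC^6*bC^3 + (-1:ℂ)*sC^6*bC^3*Complex.I + (-1:ℂ)*sC^7*bC*Complex.I + (-1:ℂ)*sC^7*bC^3 + (-1:ℂ)*sC^8*bC) * hbC + ((2:ℂ)*bC^3 + (4:ℂ)*sC*bC^3 + (-2:ℂ)*sC*bC^5 + (2:ℂ)*sC*bC^5*Complex.I + (-5:ℂ)*sC^2*bC^3 + sC^2*bC^5 + sC^2*bC^5*Complex.I + (-1:ℂ)*sC^2*bC^5*Complex.I^2 + (-16:ℂ)*sC^3*bC^3 + (9:ℂ)*sC^3*bC^5 + (-7:ℂ)*sC^3*bC^5*Complex.I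 + (-3/2:ℂ)*sC^3*bC^5*Complex.I^2 + (-1:ℂ)*sC^3*bC^7 + sC^3*bC^7*Complex.I + (1/2:ℂ)*sC^3*bC^7*Complex.I^2 + (-1/2:ℂ)*sC^3*bC^7*Complex.I^3 + (-5:ℂ)*sC^4*bC^3 + (2:ℂ)*sC^4*bC^5 + (-29/4:ℂ)*sC^4*bC^5*Complex.I + (5/4:ℂ)*sC^4*bC^5*Complex.I^2 + (7/8:ℂ)*sC^4*bC^7*Complex.I + (-1/8:ℂ)*sC^4*bC^7*Complex.I^2 + (-3/8:ℂ)*sC^4*bC^7*Complex.I^3 + (1/8:ℂ)*sC^4*bC^7*Complex.I^4 + (12:ℂ)*sC^5*bC^3 + (-8:ℂ)*sC^5*bC^5 + (1/4:ℂ)*sC^5*bC^5*Complex.I + (11/4:ℂ)*sC^5*bC^5*Complex.I^2 + sC^5*bC^7 + (-1/8:ℂ)*sC^5*bC^7*Complex.I + (-5/8:ℂ)*sC^5*bC^7*Complex.I^2 + (1/8:ℂ)*sC^5*bC^7*Complex.I^3 + (1/8:ℂ)*sC^5*bC^7*Complex.I^4 + (9:ℂ)*sC^6*bC^3 + (-3:ℂ)*sC^6*bC^5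 + (5/4:ℂ)*sC^6*bC^5*Complex.I + (3/4:ℂ)*sC^6*bC^5*Complex.I^2 + sC^7*bC^5 + (-1/4:ℂ)*sC^7*bC^5*Complex.I + (-1/4:ℂ)*sC^7*bC^5*Complex.I^2 + (-1:ℂ)*sC^8*bC^3) * hI
  · linear_combination ((2:ℂ)*bC + (2:ℂ)*bC*Complex.I + (2:ℂ)*sC*bC + (4:ℂ)*sC*bC*Complex.I + (-6:ℂ)*sC^2*bC + (-2:ℂ)*sC^2*bC*Complex.I + (-6:ℂ)*sC^3*bC + (-8:ℂ)*sC^3*bC*Complex.I + (6:ℂ)*sC^4*bC + (-2:ℂ)*sC^4*bC*Complex.I + (6:ℂ)*sC^5*bC + (4:ℂ)*sC^5*bC*Complex.I + (-2:ℂ)*sC^6*bC + (2:ℂ)*sC^6*bC*Complex.I + (-2:ℂ)*sC^7*bC) * hsC + ((-2:ℂ)*bC + (-2:ℂ)*bC*Complex.I + (-2:ℂ)*sC*bC*Complex.I + (2:ℂ)*sC*bC^3 + (2:ℂ)*sC*bC^3*Complex.I + (7:ℂ)*sC^2*bC + (5:ℂ)*sC^2*bC*Complex.I + (-1:ℂ)*sC^2*bC^3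 + sC^2*bC^3*Complex.I + (5:ℂ)*sC^3*bC*Complex.I + (-7:ℂ)*sC^3*bC^3 + (-6:ℂ)*sC^3*bC^3*Complex.I + sC^3*bC^5 + sC^3*bC^5*Complex.I + (-9:ℂ)*sC^4*bC + (-4:ℂ)*sC^4*bC*Complex.I + (-6:ℂ)*sC^4*bC^3*Complex.I + sC^4*bC^5*Complex.I + (-4:ℂ)*sC^5*bC*Complex.I + (6:ℂ)*sC^5*bC^3 + (-1:ℂ)*sC^5*bC^5 + (5:ℂ)*sC^6*bC + sC^6*bC*Complex.I + sC^6*bC^3 + sC^6*bC^3*Complex.I + sC^7*bC*Complex.I + (-1:ℂ)*sC^7*bC^3 + (-1:ℂ)*sC^8*bC) * hbC + ((2:ℂ)*bC^3 + (4:ℂ)*sC*bC^3 + (-2:ℂ)*sC*bC^5 + (-2:ℂ)*sC*bC^5*Complex.I + (-5:ℂ)*sC^2*bC^3 + sC^2*bC^5 + (-1:ℂ)*sC^2*bC^5*Complex.I + (-1:ℂ)*sC^2*bC^5*Complex.I^2 + (-16:ℂ)*sC^3*bC^3 + (9:ℂ)*sC^3*bC^5 + (7:ℂ)*sC^3*bC^5*Complex.I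 + (-3/2:ℂ)*sC^3*bC^5*Complex.I^2 + (-1:ℂ)*sC^3*bC^7 + (-1:ℂ)*sC^3*bC^7*Complex.I + (1/2:ℂ)*sC^3*bC^7*Complex.I^2 + (1/2:ℂ)*sC^3*bC^7*Complex.I^3 + (-5:ℂ)*sC^4*bC^3 + (2:ℂ)*sC^4*bC^5 + (29/4:ℂ)*sC^4*bC^5*Complex.I + (5/4:ℂ)*sC^4*bC^5*Complex.I^2 + (-7/8:ℂ)*sC^4*bC^7*Complex.I + (-1/8:ℂ)*sC^4*bC^7*Complex.I^2 + (3/8:ℂ)*sC^4*bC^7*Complex.I^3 + (1/8:ℂ)*sC^4*bC^7*Complex.I^4 + (12:ℂ)*sC^5*bC^3 + (-8:ℂ)*sC^5*bC^5 + (-1/4:ℂ)*sC^5*bC^5*Complex.I + (11/4:ℂ)*sC^5*bC^5*Complex.I^2 + sC^5*bC^7 + (1/8:ℂ)*sC^5*bC^7*Complex.I + (-5/8:ℂ)*sC^5*bC^7*Complex.I^2 + (-1/8:ℂ)*sC^5*bC^7*Complex.I^3 + (1/8:ℂ)*sC^5*bC^7*Complex.I^4 + (9:ℂ)*sC^6*bC^3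 + (-3:ℂ)*sC^6*bC^5 + (-5/4:ℂ)*sC^6*bC^5*Complex.I + (3/4:ℂ)*sC^6*bC^5*Complex.I^2 + sC^7*bC^5 + (1/4:ℂ)*sC^7*bC^5*Complex.I + (-1/4:ℂ)*sC^7*bC^5*Complex.I^2 + (-1:ℂ)*sC^8*bC^3) * hI
  · linear_combination ((4:ℂ) + (-2:ℂ)*Complex.I + (6:ℂ)*sC + (-6:ℂ)*sC*Complex.I + (-7:ℂ)*sC^2 + (-2:ℂ)*sC^2*Complex.I + (-16:ℂ)*sC^3 + (10:ℂ)*sC^3*Complex.I + (3:ℂ)*sC^4 + (10:ℂ)*sC^4*Complex.I + (14:ℂ)*sC^5 + (-2:ℂ)*sC^5*Complex.I + (2:ℂ)*sC^6 + (-6:ℂ)*sC^6*Complex.I + (-4:ℂ)*sC^7 + (-2:ℂ)*sC^7*Complex.I + (-1:ℂ)*sC^8) * hsC + ((-4:ℂ) + (2:ℂ)*Complex.I + (-1:ℂ)*bC^2 + (-6:ℂ)*sC + (4:ℂ)*sC*Complex.I + (4:ℂ)*sC*bC^2 + (-2:ℂ)*sC*bC^2*Complex.I + sC^2 + (-3:ℂ)*sC^2*Complex.I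 + (12:ℂ)*sC^2*bC^2 + (-3:ℂ)*sC^2*bC^2*Complex.I + (-3:ℂ)*sC^2*bC^4 + (-10:ℂ)*sC^3 + (-10:ℂ)*sC^3*Complex.I + (6:ℂ)*sC^3*bC^2 + (5:ℂ)*sC^3*bC^2*Complex.I + (-2:ℂ)*sC^3*bC^4 + (-1:ℂ)*sC^3*bC^4*Complex.I + (-63/2:ℂ)*sC^4 + (-1:ℂ)*sC^4*Complex.I + (3/4:ℂ)*sC^4*bC^2 + (12:ℂ)*sC^4*bC^2*Complex.I + (3:ℂ)*sC^4*bC^4 + (-2:ℂ)*sC^4*bC^4*Complex.I + (-1/4:ℂ)*sC^4*bC^6 + (-37/2:ℂ)*sC^5 + (8:ℂ)*sC^5*Complex.I + (6:ℂ)*sC^5*bC^2 + (6:ℂ)*sC^5*bC^2*Complex.I + (1/2:ℂ)*sC^5*bC^4 + (-1:ℂ)*sC^5*bC^4*Complex.I + (4:ℂ)*sC^6 + (3:ℂ)*sC^6*Complex.I + (9/2:ℂ)*sC^6*bC^2 + (-1:ℂ)*sC^6*bC^2*Complex.I + (-3/2:ℂ)*sC^6*bC^4 + (3:ℂ)*sC^7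 + (-2:ℂ)*sC^7*Complex.I + (-1:ℂ)*sC^7*bC^2*Complex.I + (-3/2:ℂ)*sC^8 + (-1:ℂ)*sC^8*Complex.I + (-1/4:ℂ)*sC^8*bC^2 + (-1/2:ℂ)*sC^9) * hbC + (bC^2 + bC^4 + (6:ℂ)*sC*bC^2 + (-4:ℂ)*sC*bC^4 + (2:ℂ)*sC*bC^4*Complex.I + (31/2:ℂ)*sC^2*bC^2 + (-35/2:ℂ)*sC^2*bC^4 + (3:ℂ)*sC^2*bC^4*Complex.I + (1/2:ℂ)*sC^2*bC^4*Complex.I^2 + (3:ℂ)*sC^2*bC^6 + (-3/2:ℂ)*sC^2*bC^6*Complex.I^2 + (23:ℂ)*sC^3*bC^2 + (-14:ℂ)*sC^3*bC^4 + (-6:ℂ)*sC^3*bC^4*Complex.I + (2:ℂ)*sC^3*bC^4*Complex.I^2 + (2:ℂ)*sC^3*bC^6 + sC^3*bC^6*Complex.I + (-1:ℂ)*sC^3*bC^6*Complex.I^2 + (-1/2:ℂ)*sC^3*bC^6*Complex.I^3 + (45/2:ℂ)*sC^4*bC^2 + (69/16:ℂ)*sC^4*bC^4 + (-57/4:ℂ)*sC^4*bC^4*Complex.I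 + (49/16:ℂ)*sC^4*bC^4*Complex.I^2 + (-57/16:ℂ)*sC^4*bC^6 + (15/8:ℂ)*sC^4*bC^6*Complex.I + (7/4:ℂ)*sC^4*bC^6*Complex.I^2 + (-7/8:ℂ)*sC^4*bC^6*Complex.I^3 + (1/16:ℂ)*sC^4*bC^6*Complex.I^4 + (1/4:ℂ)*sC^4*bC^8 + (-3/16:ℂ)*sC^4*bC^8*Complex.I^2 + (1/16:ℂ)*sC^4*bC^8*Complex.I^4 + (16:ℂ)*sC^5*bC^2 + (13/4:ℂ)*sC^5*bC^4 + (-7:ℂ)*sC^5*bC^4*Complex.I + (9/4:ℂ)*sC^5*bC^4*Complex.I^2 + (-9/8:ℂ)*sC^5*bC^6 + (3/4:ℂ)*sC^5*bC^6*Complex.I + (1/2:ℂ)*sC^5*bC^6*Complex.I^2 + (-1/4:ℂ)*sC^5*bC^6*Complex.I^3 + (1/8:ℂ)*sC^5*bC^6*Complex.I^4 + (17/2:ℂ)*sC^6*bC^2 + (-45/8:ℂ)*sC^6*bC^4 + (3/2:ℂ)*sC^6*bC^4*Complex.I + (7/8:ℂ)*sC^6*bC^4*Complex.I^2 + (23/16:ℂ)*sC^6*bC^6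 + (-1/8:ℂ)*sC^6*bC^6*Complex.I + (-3/4:ℂ)*sC^6*bC^6*Complex.I^2 + (1/8:ℂ)*sC^6*bC^6*Complex.I^3 + (1/16:ℂ)*sC^6*bC^6*Complex.I^4 + (3:ℂ)*sC^7*bC^2 + (-11/4:ℂ)*sC^7*bC^4 + sC^7*bC^4*Complex.I + (1/4:ℂ)*sC^7*bC^4*Complex.I^2 + (1/2:ℂ)*sC^8*bC^2 + (5/16:ℂ)*sC^8*bC^4 + (-1/4:ℂ)*sC^8*bC^4*Complex.I + (1/16:ℂ)*sC^8*bC^4*Complex.I^2) * hI
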